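/- arXiv:0807.3298 — 3 statements merged into one kernel-verified Lean document; each statement's English description precedes it below -/
import Mathlib

section
/- Let ν be a non-atomic Borel probability measure on the circle 𝕋¹ = ℝ/ℤ, and let f : 𝕋¹ → 𝕋¹ be a homeomorphism that preserves ν. Then there exist a point x ∈ 𝕋¹ and a radius sequence r : ℕ → ℝ_{≥0} such that ∑_{n=0}^∞ ν(B(x, r(n))) = ∞ and yet ν( ⋂_{N ∈ ℕ} ⋃_{n ≥ N} (fⁿ)⁻¹( B(x, r(n)) ) ) = 0. In particular, the dynamical system (𝕋¹, ν, ℕ, f) does not have the shrinking target property. -/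
/-!
Pick `x` recurrent under `f⁻¹` (Poincaré) such that every one-sided arc at `x` has positive mass;
the exceptional points are null, since off a null set they are endpoints of gaps of the support,
which are countably many. For a scale `η` choose `δ < η` such that both arcs `x ± (δ, η)` have mass
`≥ c > 0`. Whenever `f⁻ⁿ x` is `δ`-close to `x`, take `r` maximal with `f⁻ⁿ B(x, r) ⊆ B(x, η)`:
for every larger radius the connected set `f⁻ⁿ B(x, r')` leaves `B(x, η)`, so it covers one of the
two arcs, and by invariance and the absence of atoms `ν B(x, r) ≥ c`. The series at each scale
therefore diverges, and splicing finite blocks of the scales `η → 0` gives a divergent series whose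
limsup set is contained in `{x}`.
-/

open MeasureTheory Metric Set Filter Topology

open scoped ENNReal

lemma Homeomorph.coe_pow {X : Type*} [TopologicalSpace X] (f : X ≃ₜ X) (n : ℕ) :
    ⇑(f ^ n) = (⇑f)^[n] := by
  induction n with
  | zero => rfl
  | succ n ih => rw [pow_succ, Function.iterate_succ, ← ih]; rfl

lemma Homeomorph.coe_symm_pow {X : Type*} [TopologicalSpace X] (f : X ≃ₜ X) (n : ℕ) :
    ⇑(f ^ n).symm = (⇑f.symm)^[n] := by
  rw [← coe_pow]
  exact congrArg _ (inv_pow f n).symm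

lemma ENNReal.exists_lt_sum_Ico_of_tsum_eq_top {a : ℕ → ℝ≥0∞} (hfin : ∀ n, a n ≠ ∞)
    (h : ∑' n, a n = ∞) (N : ℕ) {c : ℝ≥0∞} (hc : c ≠ ∞) : ∃ M, c < ∑ n ∈ Finset.Ico N M, a n := by
  have htail : ∑' n, a (n + N) = ∞ := by
    rw [← ENNReal.summable.sum_add_tsum_nat_add', ENNReal.add_eq_top] at h
    exact h.resolve_left (ENNReal.sum_ne_top.2 fun n _ => hfin n)
  rw [ENNReal.tsum_eq_iSup_nat] at htail
  obtain ⟨m, hm⟩ := lt_iSup_iff.1 (htail ▸ hc.lt_top)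
  refine ⟨N + m, ?_⟩
  simpa [Finset.sum_Ico_eq_sum_range, add_comm] using hm

lemma ENNReal.exists_tendsto_atTop_tsum_eq_top {a : ℕ → ℕ → ℝ≥0∞} (hfin : ∀ k n, a k n ≠ ∞)
    (h : ∀ k, ∑' n, a k n = ∞) : ∃ κ : ℕ → ℕ, Tendsto κ atTop atTop ∧ ∑' n, a (κ n) n = ∞ := by
  choose M hM using fun k N =>
    exists_lt_sum_Ico_of_tsum_eq_top (hfin k) (h k) N one_ne_top
  -- blocks `[N k, N (k + 1))`, each carrying a sum `> 1` of the `k`-th series; `κ = k` on block `k`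
  let N : ℕ → ℕ := fun k => Nat.rec (motive := fun _ => ℕ) 0 (fun k Nk => M k Nk) k
  have hN : StrictMono N := strictMono_nat_of_lt_succ fun k => by
    by_contra! hle
    have := hM k (N k)
    rw [Finset.Ico_eq_empty_of_le hle, Finset.sum_empty] at this
    exact not_lt_zero this
  let κ : ℕ → ℕ := fun n => Nat.findGreatest (fun k : ℕ => N k ≤ n) n
  have hκ : ∀ k, ∀ n ∈ Finset.Ico (N k) (N (k + 1)), κ n = k := by
    intro k n hn
    rw [Finset.mem_Ico] at hn
    refine le_antisymm ?_ (Nat.le_findGreatest (hN.le_apply.trans hn.1) hn.1)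
    have := Nat.findGreatest_spec (P := fun k => N k ≤ n) (Nat.zero_le n) (Nat.zero_le n)
    exact Nat.lt_succ_iff.1 (hN.lt_iff_lt.1 (this.trans_lt hn.2))
  refine ⟨κ, tendsto_atTop_atTop.2 fun k =>
    ⟨N k, fun n hn => Nat.le_findGreatest (hN.le_apply.trans hn) hn⟩, ?_⟩
  have hpartial : ∀ K : ℕ, (K : ℝ≥0∞) ≤ ∑ n ∈ Finset.range (N K), a (κ n) n := by
    intro K
    induction K with
    | zero => simp
    | succ K ih =>
      have hblock : ∑ n ∈ Finset.Ico (N K) (N (K + 1)), a (κ n) n =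
          ∑ n ∈ Finset.Ico (N K) (M K (N K)), a K n :=
        Finset.sum_congr rfl fun n hn => by rw [hκ K n hn]
      rw [← Finset.sum_range_add_sum_Ico _ (hN.monotone K.le_succ), hblock, Nat.cast_succ]
      exact add_le_add ih (hM K (N K)).le
  refine eq_top_of_forall_nnreal_le fun r => ?_
  obtain ⟨K, hK⟩ := exists_nat_gt r
  calc (r : ℝ≥0∞) ≤ K := by exact_mod_cast hK.le
    _ ≤ _ := hpartial K
    _ ≤ _ := ENNReal.sum_le_tsum _

lemma le_measure_ball_of_forall_gt {X : Type*} [PseudoMetricSpace X] [MeasurableSpace X]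
    [OpensMeasurableSpace X] {μ : Measure X} [IsFiniteMeasure μ] {x : X} {ρ : ℝ} {c : ℝ≥0∞}
    (hsphere : μ (sphere x ρ) = 0) (h : ∀ r > ρ, c ≤ μ (ball x r)) : c ≤ μ (ball x ρ) := by
  have hlim : Tendsto (fun r => μ (ball x r)) (𝓝[>] ρ) (𝓝 (μ (closedBall x ρ))) := by
    rw [← biInter_gt_ball]
    exact tendsto_measure_biInter_gt (fun r _ => measurableSet_ball.nullMeasurableSet)
      (fun r r' _ hrr' => ball_subset_ball hrr') ⟨ρ + 1, by linarith, measure_ne_top μ _⟩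
  calc c ≤ μ (closedBall x ρ) := ge_of_tendsto hlim (eventually_nhdsWithin_of_forall h)
    _ ≤ μ (ball x ρ) + μ (sphere x ρ) := by
      rw [← ball_union_sphere]; exact measure_union_le _ _
    _ = μ (ball x ρ) := by rw [hsphere, add_zero]

lemma eq_of_frequently_dist_lt {X ι : Type*} [MetricSpace X] {l : Filter ι} {x y : X}
    {ε : ι → ℝ} (hε : Tendsto ε l (𝓝 0)) (h : ∃ᶠ i in l, dist y x < ε i) : y = x := by
  by_contra hne
  obtain ⟨i, hi, hεi⟩ := (h.and_eventually (hε.eventually (gt_mem_nhds (dist_pos.2 hne)))).exists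
  exact hεi.not_gt hi

namespace UnitAddCircle

lemma exists_coe_eq_abs_eq_norm (z : UnitAddCircle) :
    ∃ t : ℝ, (t : UnitAddCircle) = z ∧ |t| = ‖z‖ := by
  induction z using QuotientAddGroup.induction_on with
  | H t =>
    refine ⟨t - round t, ?_, UnitAddCircle.norm_eq.symm⟩
    rw [AddCircle.coe_sub, sub_eq_self, AddCircle.coe_eq_zero_iff]
    exact ⟨round t, by simp⟩

lemma norm_coe_le_abs (t : ℝ) : ‖(t : UnitAddCircle)‖ ≤ |t| :=
  QuotientAddGroup.norm_mk_le_norm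

lemma dist_add_coe_le (x : UnitAddCircle) (t : ℝ) : dist (x + t) x ≤ |t| := by
  simpa [dist_eq_norm] using norm_coe_le_abs t

lemma ball_eq_image (x : UnitAddCircle) (r : ℝ) :
    ball x r = (fun t : ℝ => x + t) '' Ioo (-r) r := by
  ext y
  constructor
  · intro hy
    obtain ⟨w, hw, hwy⟩ := exists_coe_eq_abs_eq_norm (y - x)
    refine ⟨w, abs_lt.1 ?_, by simp [hw]⟩
    rwa [hwy, ← dist_eq_norm]
  · rintro ⟨t, ht, rfl⟩
    exact (dist_add_coe_le x t).trans_lt (abs_lt.2 ht)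

lemma isPreconnected_ball (x : UnitAddCircle) (r : ℝ) : IsPreconnected (ball x r) := by
  rw [ball_eq_image]
  exact isPreconnected_Ioo.image _ (by fun_prop)

lemma sphere_subset_pair (x : UnitAddCircle) (r : ℝ) :
    sphere x r ⊆ {x + r, x - r} := by
  intro y hy
  obtain ⟨w, hw, hwy⟩ := exists_coe_eq_abs_eq_norm (y - x)
  rw [← dist_eq_norm, mem_sphere.1 hy] at hwy
  have hy : y = x + w := by simp [hw]
  rcases eq_or_eq_neg_of_abs_eq hwy with h | h
  · exact Or.inl (by rw [hy, h])
  · exact Or.inr (by rw [hy, h, AddCircle.coe_neg, ← sub_eq_add_neg]; rfl)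

lemma measure_sphere_eq_zero (ν : Measure UnitAddCircle) [NullSingletonClass ν]
    (x : UnitAddCircle) (r : ℝ) : ν (sphere x r) = 0 :=
  measure_mono_null (sphere_subset_pair x r) ((toFinite _).measure_zero ν)

/-- The arc `{x + σ t | a < t < b}`; the sign `σ = ±1` selects the side of `x`. -/
def arc (x : UnitAddCircle) (σ a b : ℝ) : Set UnitAddCircle :=
  (fun t : ℝ => x + ↑(σ * t)) '' Ioo a b

lemma isOpen_arc (x : UnitAddCircle) {σ : ℝ} (hσ : σ ≠ 0) (a b : ℝ) : IsOpen (arc x σ a b) := by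
  have : IsOpenMap fun t : ℝ => x + ↑(σ * t) :=
    (Homeomorph.addLeft x).isOpenMap.comp
      ((QuotientAddGroup.isOpenMap_coe).comp (Homeomorph.mulLeft₀ σ hσ).isOpenMap)
  exact this _ isOpen_Ioo

lemma arc_subset_arc (x : UnitAddCircle) (σ : ℝ) {a a' b b' : ℝ} (ha : a' ≤ a) (hb : b ≤ b') :
    arc x σ a b ⊆ arc x σ a' b' :=
  image_mono (Ioo_subset_Ioo ha hb)

lemma exists_arc_subset_of_isPreconnected {x a b : UnitAddCircle} {δ η : ℝ}
    {S : Set UnitAddCircle} (hS : IsPreconnected S) (ha : a ∈ S) (hb : b ∈ S)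
    (hax : dist a x < δ) (hbx : η ≤ dist b x) : ∃ σ : ℝ, |σ| = 1 ∧ arc x σ δ η ⊆ S := by
  by_contra! H
  obtain ⟨_, ⟨s, ⟨hs₁, hs₂⟩, rfl⟩, hpS⟩ := not_subset.1 (H 1 (by simp))
  obtain ⟨_, ⟨u, ⟨hu₁, hu₂⟩, rfl⟩, hqS⟩ := not_subset.1 (H (-1) (by simp))
  -- `ball z ρ` is the arc from `x - u` to `x + s`; both endpoints are missing from `S`, so this
  -- arc separates `a` from `b` inside `S`
  set z : UnitAddCircle := x + ↑((s - u) / 2)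
  set ρ : ℝ := (s + u) / 2 with hρ
  have hzx : dist z x ≤ |s - u| / 2 :=
    (dist_add_coe_le x _).trans_eq (by rw [abs_div, abs_two])
  have hlt : |s - u| / 2 < ρ - δ ∧ |s - u| / 2 < η - ρ := by
    rw [hρ]
    constructor <;> rcases abs_cases (s - u) with ⟨h, -⟩ | ⟨h, -⟩ <;> rw [h] <;> linarith
  have haz : a ∈ ball z ρ := by
    rw [mem_ball]; linarith [dist_triangle_right a z x]
  have hbz : b ∉ closedBall z ρ := by
    rw [mem_closedBall, not_le]; linarith [dist_triangle b z x]
  have hp : z + ρ = x + ↑(1 * s) := by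
    rw [add_assoc, ← AddCircle.coe_add, hρ]; ring_nf
  have hq : z - ρ = x + ↑(-1 * u) := by
    rw [add_sub_assoc, ← AddCircle.coe_sub, hρ]; ring_nf
  have hSsub : S ⊆ ball z ρ ∪ (closedBall z ρ)ᶜ := by
    intro y hy
    rw [mem_union, mem_compl_iff, mem_ball, mem_closedBall]
    by_contra! hyz
    rcases sphere_subset_pair z ρ (mem_sphere.2 (hyz.2.antisymm hyz.1)) with rfl | rfl
    · exact hpS (hp ▸ hy : x + ↑(1 * s) ∈ S)
    · exact hqS (hq ▸ hy : x + ↑(-1 * u) ∈ S)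
  have hdisj : Disjoint (ball z ρ) (closedBall z ρ)ᶜ :=
    disjoint_compl_right_iff_subset.2 ball_subset_closedBall
  rcases hS.subset_or_subset isOpen_ball isClosed_closedBall.isOpen_compl hdisj hSsub with h | h
  · exact hbz (ball_subset_closedBall (h hb))
  · exact h ha (ball_subset_closedBall haz)

lemma mem_arc_or_mem_arc {x y : UnitAddCircle} {σ q : ℝ} (hσ : |σ| = 1) (hxy : x ≠ y)
    (hq : dist y x < q) : y ∈ arc x σ 0 q ∨ x ∈ arc y σ 0 q := by
  obtain ⟨w, hw, hwy⟩ := exists_coe_eq_abs_eq_norm (y - x)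
  rw [← dist_eq_norm] at hwy
  have hσσ : σ * σ = 1 := by rw [← abs_mul_abs_self, hσ, one_mul]
  have hsw : |σ * w| < q := by rwa [abs_mul, hσ, one_mul, hwy]
  have hσw : σ * w ≠ 0 := by
    refine mul_ne_zero (by rintro rfl; simp at hσ) ?_
    rintro rfl
    exact hxy (sub_eq_zero.1 (by rw [← hw, AddCircle.coe_zero])).symm
  rcases hσw.lt_or_gt with h | h
  · refine Or.inr ⟨-(σ * w), ⟨by linarith, by linarith [neg_abs_le (σ * w)]⟩, ?_⟩
    change y + ↑(σ * -(σ * w)) = x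
    rw [mul_neg, ← mul_assoc, hσσ, one_mul, AddCircle.coe_neg, hw]
    abel
  · refine Or.inl ⟨σ * w, ⟨h, lt_of_abs_lt hsw⟩, ?_⟩
    change x + ↑(σ * (σ * w)) = y
    rw [← mul_assoc, hσσ, one_mul, hw]
    abel

lemma countable_setOf_measure_arc_eq_zero_inter_support (ν : Measure UnitAddCircle) {σ q : ℝ}
    (hσ : |σ| = 1) (hq : 0 < q) : ({x | ν (arc x σ 0 q) = 0} ∩ ν.support).Countable := by
  set A := {x | ν (arc x σ 0 q) = 0} ∩ ν.support
  have hsep : ∀ x ∈ A, ∀ y ∈ A, x ≠ y → q ≤ dist y x := by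
    intro x hx y hy hxy
    by_contra! hlt
    have hσ0 : σ ≠ 0 := by rintro rfl; simp at hσ
    rcases mem_arc_or_mem_arc hσ hxy hlt with h | h
    · exact Measure.subset_compl_support_of_isOpen (isOpen_arc x hσ0 0 q) hx.1 h hy.2
    · exact Measure.subset_compl_support_of_isOpen (isOpen_arc y hσ0 0 q) hy.1 h hx.2
  refine Set.PairwiseDisjoint.countable_of_isOpen (s := fun x => ball x (q / 2))
    (fun x hx y hy hxy => ball_disjoint_ball ?_) (fun _ _ => isOpen_ball)
    (fun x _ => nonempty_ball.2 (half_pos hq))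
  rw [add_halves, dist_comm]
  exact hsep x hx y hy hxy

lemma measure_setOf_exists_measure_arc_eq_zero (ν : Measure UnitAddCircle)
    [NullSingletonClass ν] {σ : ℝ} (hσ : |σ| = 1) :
    ν {x | ∃ ε > 0, ν (arc x σ 0 ε) = 0} = 0 := by
  have hsub : {x | ∃ ε > 0, ν (arc x σ 0 ε) = 0} ⊆
      ν.supportᶜ ∪ ⋃ m : ℕ, {x | ν (arc x σ 0 (1 / (m + 1))) = 0} ∩ ν.support := by
    rintro x ⟨ε, hε, hx⟩
    by_cases hxs : x ∈ ν.support
    · obtain ⟨m, hm⟩ := exists_nat_one_div_lt hε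
      exact Or.inr (mem_iUnion.2 ⟨m, measure_mono_null (arc_subset_arc x σ le_rfl hm.le) hx, hxs⟩)
    · exact Or.inl hxs
  refine measure_mono_null hsub (measure_union_null Measure.measure_compl_support ?_)
  exact measure_iUnion_null fun m =>
    (countable_setOf_measure_arc_eq_zero_inter_support ν hσ Nat.one_div_pos_of_nat).measure_zero ν

lemma ae_measure_arc_ne_zero (ν : Measure UnitAddCircle) [NullSingletonClass ν] :
    ∀ᵐ x ∂ν, ∀ σ : ℝ, |σ| = 1 → ∀ ε > 0, ν (arc x σ 0 ε) ≠ 0 := by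
  have h : ∀ σ : ℝ, |σ| = 1 → ∀ᵐ x ∂ν, ∀ ε > 0, ν (arc x σ 0 ε) ≠ 0 := fun σ hσ => by
    simpa [ae_iff] using measure_setOf_exists_measure_arc_eq_zero ν hσ
  filter_upwards [h 1 (by simp), h (-1) (by simp)] with x h₁ h₂ σ hσ
  rcases (abs_eq zero_le_one).1 hσ with rfl | rfl
  exacts [h₁, h₂]

lemma iUnion_arc_eq (x : UnitAddCircle) (σ : ℝ) {η : ℝ} (hη : 0 < η) :
    ⋃ m : ℕ, arc x σ (η / (m + 2)) η = arc x σ 0 η := by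
  simp_rw [arc, ← image_iUnion]
  congr 1
  ext t
  simp only [mem_iUnion, mem_Ioo]
  constructor
  · rintro ⟨m, ht, htη⟩
    exact ⟨(by positivity : 0 < η / (m + 2)).trans ht, htη⟩
  · rintro ⟨ht, htη⟩
    obtain ⟨m, hm⟩ := exists_nat_gt (η / t)
    refine ⟨m, (div_lt_iff₀ (by positivity)).2 ?_, htη⟩
    rw [div_lt_iff₀ ht] at hm
    nlinarith

lemma exists_measure_arc_ne_zero (ν : Measure UnitAddCircle) {x : UnitAddCircle}
    (hx : ∀ σ : ℝ, |σ| = 1 → ∀ ε > 0, ν (arc x σ 0 ε) ≠ 0) {η : ℝ} (hη : 0 < η) :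
    ∃ δ, 0 < δ ∧ ν (arc x 1 δ η) ≠ 0 ∧ ν (arc x (-1) δ η) ≠ 0 := by
  have h : ∀ σ : ℝ, |σ| = 1 → ∀ᶠ m : ℕ in atTop, ν (arc x σ (η / (m + 2)) η) ≠ 0 := by
    intro σ hσ
    have hmono : Monotone fun m : ℕ => arc x σ (η / (m + 2)) η := fun m n hmn =>
      arc_subset_arc x σ (div_le_div_of_nonneg_left hη.le (by positivity) (by gcongr)) le_rfl
    refine (tendsto_measure_iUnion_atTop hmono).eventually_ne ?_
    rw [iUnion_arc_eq x σ hη]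
    exact hx σ hσ η hη
  obtain ⟨m, h₁, h₂⟩ := ((h 1 (by simp)).and (h (-1) (by simp))).exists
  exact ⟨η / (m + 2), by positivity, h₁, h₂⟩

lemma exists_radius_preimage_subset_ball (ν : Measure UnitAddCircle) [IsFiniteMeasure ν]
    [NullSingletonClass ν] {h : UnitAddCircle ≃ₜ UnitAddCircle} (hh : MeasurePreserving h ν ν)
    {x : UnitAddCircle} {δ η : ℝ} {c : ℝ≥0∞} (hη : η ≤ 1 / 2) (hx : dist (h.symm x) x < δ)
    (hc : ∀ σ : ℝ, |σ| = 1 → c ≤ ν (arc x σ δ η)) :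
    ∃ r, 0 ≤ r ∧ h ⁻¹' ball x r ⊆ ball x η ∧ c ≤ ν (ball x r) := by
  set W := h.symm ⁻¹' ball x η
  have hW : Wᶜ.Nonempty := by
    have : ‖((1 / 2 : ℝ) : UnitAddCircle)‖ = 1 / 2 := by
      simpa using AddCircle.norm_half_period_eq (1 : ℝ)
    refine ⟨h (x + ↑(1 / 2 : ℝ)), fun hmem => ?_⟩
    rw [mem_preimage, Homeomorph.symm_apply_apply, mem_ball, dist_eq_norm, add_sub_cancel_left,
      this] at hmem
    linarith
  have hsub : h ⁻¹' ball x (infDist x Wᶜ) ⊆ ball x η := fun y hy => by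
    have := ball_infDist_compl_subset (s := W) (mem_preimage.1 hy)
    rwa [mem_preimage, Homeomorph.symm_apply_apply] at this
  refine ⟨infDist x Wᶜ, infDist_nonneg, hsub,
    le_measure_ball_of_forall_gt (measure_sphere_eq_zero ν x _) fun r hr => ?_⟩
  -- for `r` beyond `infDist x Wᶜ`, the connected set `h ⁻¹' ball x r` runs from `δ`-near `x` to
  -- outside `ball x η`, so it covers one of the two arcs
  obtain ⟨z, hzW, hxz⟩ := (infDist_lt_iff hW).1 hr
  obtain ⟨σ, hσ, hsub⟩ := exists_arc_subset_of_isPreconnected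
    (h.isPreconnected_preimage.2 (isPreconnected_ball x r))
    (a := h.symm x) (by simpa using infDist_nonneg.trans_lt hr)
    (b := h.symm z) (by simpa [dist_comm] using hxz) hx (by simpa [W] using hzW)
  calc c ≤ ν (arc x σ δ η) := hc σ hσ
    _ ≤ ν (h ⁻¹' ball x r) := measure_mono hsub
    _ = ν (ball x r) := hh.measure_preimage measurableSet_ball.nullMeasurableSet

lemma exists_radii_tsum_eq_top (ν : Measure UnitAddCircle) [IsFiniteMeasure ν]
    [NullSingletonClass ν] {f : UnitAddCircle ≃ₜ UnitAddCircle} (hf : MeasurePreserving f ν ν)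
    {x : UnitAddCircle} (hrec : ∀ s ∈ 𝓝 x, ∃ᶠ n in atTop, (⇑f.symm)^[n] x ∈ s)
    (hsupp : ∀ σ : ℝ, |σ| = 1 → ∀ ε > 0, ν (arc x σ 0 ε) ≠ 0) {η : ℝ} (hη : 0 < η)
    (hη' : η ≤ 1 / 2) :
    ∃ r : ℕ → ℝ, (∀ n, 0 ≤ r n) ∧ (∀ n, (⇑f)^[n] ⁻¹' ball x (r n) ⊆ ball x η) ∧
      ∑' n, ν (ball x (r n)) = ∞ := by
  obtain ⟨δ, hδ, h₁, h₂⟩ := exists_measure_arc_ne_zero ν hsupp hη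
  set c := min (ν (arc x 1 δ η)) (ν (arc x (-1) δ η))
  have hc0 : c ≠ 0 := by simp [c, h₁, h₂]
  have hc : ∀ σ : ℝ, |σ| = 1 → c ≤ ν (arc x σ δ η) := by
    intro σ hσ
    rcases (abs_eq zero_le_one).1 hσ with rfl | rfl
    exacts [min_le_left _ _, min_le_right _ _]
  set R := {n | (⇑f.symm)^[n] x ∈ ball x δ}
  have hR : R.Infinite := Nat.frequently_atTop_iff_infinite.1 (hrec _ (ball_mem_nhds x hδ))
  have : ∀ n, ∃ r, 0 ≤ r ∧ (⇑f)^[n] ⁻¹' ball x r ⊆ ball x η ∧ (n ∈ R → c ≤ ν (ball x r)) := by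
    intro n
    by_cases hn : n ∈ R
    · obtain ⟨r, hr0, hsub, hcr⟩ := exists_radius_preimage_subset_ball ν (h := f ^ n)
        (by rw [Homeomorph.coe_pow]; exact hf.iterate n) hη'
        (by rw [Homeomorph.coe_symm_pow]; exact hn) hc
      exact ⟨r, hr0, by rwa [← Homeomorph.coe_pow], fun _ => hcr⟩
    · exact ⟨0, le_rfl, by simp, fun h => absurd h hn⟩
  choose r hr0 hsub hcr using this
  refine ⟨r, hr0, hsub, eq_top_iff.2 ?_⟩
  have := hR.to_subtype
  calc ∞ = ∑' n : R, c := (ENNReal.tsum_const_eq_top_of_ne_zero hc0).symm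
    _ ≤ ∑' n : R, ν (ball x (r n)) := ENNReal.tsum_le_tsum fun n => hcr n n.2
    _ ≤ ∑' n, ν (ball x (r n)) :=
      ENNReal.tsum_comp_le_tsum_of_injective Subtype.val_injective (fun n => ν (ball x (r n)))

end UnitAddCircle

/-- If `ν` is a non-atomic Borel probability measure on the circle
`𝕋¹ = ℝ/ℤ` and `f` is a `ν`-preserving homeomorphism of the circle, then there are a
point `x` and a radius sequence `r : ℕ → ℝ≥0` with `∑_n ν(B(x, r n)) = ∞` but whose
limsup set of preimages `⋂_N ⋃_{n ≥ N} (fⁿ)⁻¹(B(x, r n))` is `ν`-null; i.e. the system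
does not have the shrinking target property. -/
theorem circle_homeomorphism_not_STP (ν : Measure UnitAddCircle) [IsProbabilityMeasure ν]
    (hna : ∀ x : UnitAddCircle, ν {x} = 0)
    (f : UnitAddCircle ≃ₜ UnitAddCircle) (hf : MeasurePreserving f ν ν) :
    ∃ (x : UnitAddCircle) (r : ℕ → ℝ), (∀ n, 0 ≤ r n) ∧
      (∑' n : ℕ, ν (ball x (r n)) = ⊤) ∧
      ν (⋂ N : ℕ, ⋃ n ≥ N, (⇑f)^[n] ⁻¹' ball x (r n)) = 0 := by
  have : NullSingletonClass ν := ⟨hna⟩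
  obtain ⟨x, hrec, hsupp⟩ :=
    (((hf.symm f.toMeasurableEquiv).conservative.ae_frequently_mem_of_mem_nhds).and
      (UnitAddCircle.ae_measure_arc_ne_zero ν)).exists
  let η : ℕ → ℝ := fun k => 1 / ((k : ℝ) + 2)
  have hη : Tendsto η atTop (𝓝 0) := by
    simpa [η, Function.comp_def, add_assoc, one_add_one_eq_two] using
      (tendsto_one_div_add_atTop_nhds_zero_nat (𝕜 := ℝ)).comp (tendsto_add_atTop_nat 1)
  choose r hr0 hsub hsum using fun k : ℕ => UnitAddCircle.exists_radii_tsum_eq_top ν hf hrec hsupp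
    (η := η k) (by positivity) (one_div_le_one_div_of_le two_pos (by simp))
  obtain ⟨κ, hκ, hκsum⟩ :=
    ENNReal.exists_tendsto_atTop_tsum_eq_top (fun k n => measure_ne_top ν _) hsum
  refine ⟨x, fun n => r (κ n) n, fun n => hr0 _ _, hκsum, measure_mono_null ?_ (hna x)⟩
  intro y hy
  simp only [mem_iInter, mem_iUnion, exists_prop] at hy
  refine eq_of_frequently_dist_lt (hη.comp hκ) (frequently_atTop.2 fun N => ?_)
  obtain ⟨n, hn, hyn⟩ := hy N
  exact ⟨n, hn, hsub _ _ hyn⟩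
end

section
/- Let M be a complete, separable metric space, let ν be a non-atomic Borel probability measure on M, and let f : M → M be a bijective isometry that preserves ν. Then there exist a point x ∈ M and a radius sequence r : ℕ → ℝ_{≥0} such that ∑_{n=0}^∞ ν(B(x, r(n))) = ∞ and yet ν( ⋂_{N ∈ ℕ} ⋃_{n ≥ N} (fⁿ)⁻¹( B(x, r(n)) ) ) = 0. In particular, the dynamical system (M, ν, ℕ, f) does not have the shrinking target property. -/
open MeasureTheory Metric Filter Topology
open scoped ENNReal

/-!
By Poincaré recurrence, almost every point `x` of the support of `ν` returns to each of its
neighbourhoods infinitely often. Along return times `t k` with `d(fᵗᵏ x, x) < ρ k` use the radius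
`ρ k`, and radius `0` at all other times, where `ρ k → 0` so slowly that `∑ ν(B(x, ρ k)) = ∞`;
this is possible because every ball around `x` has positive measure. If `fᵗᵏ z ∈ B(x, ρ k)` for
infinitely many `k`, then, `f` being an isometry, `d(z, x) ≤ d(fᵗᵏ z, x) + d(fᵗᵏ x, x) < 2 ρ k`,
so `z = x`: the limsup set is `{x}`, which is null because `ν` has no atoms.
-/

theorem ENNReal.exists_tendsto_atTop_tsum_comp_eq_top {a : ℕ → ℝ≥0∞} (ha : ∀ j, a j ≠ 0) :
    ∃ b : ℕ → ℕ, Tendsto b atTop atTop ∧ ∑' k, a (b k) = ∞ := by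
  have hK : ∀ j, ∃ K : ℕ, 1 < K * a j := fun j => ENNReal.exists_nat_mul_gt (ha j) one_ne_top
  choose K hK using hK
  have hK_pos : ∀ j, 0 < K j := fun j => Nat.pos_of_ne_zero fun h => by simpa [h] using hK j
  -- `b` will run through `Σ j, Fin (K j)`, so that it takes each value `j` exactly `K j` times
  have : Infinite (Σ j, Fin (K j)) :=
    Infinite.of_injective (fun j => ⟨j, ⟨0, hK_pos j⟩⟩) fun i j h => congrArg Sigma.fst h
  let e : ℕ ≃ Σ j, Fin (K j) := (Denumerable.ofEncodableOfInfinite _).eqv.symm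
  refine ⟨fun k => (e k).1, ?_, ?_⟩
  · rw [← Nat.cofinite_eq_atTop]
    refine (Tendsto.cofinite_of_finite_preimage_singleton fun j => ?_).comp
      e.injective.tendsto_cofinite
    rw [← Set.range_sigmaMk]
    exact Set.finite_range _
  · rw [e.tsum_eq (fun p => a p.1), ENNReal.tsum_sigma', eq_top_iff]
    calc ∞ = ∑' _ : ℕ, (1 : ℝ≥0∞) := (ENNReal.tsum_const_eq_top_of_ne_zero one_ne_zero).symm
      _ ≤ ∑' j, ∑' _ : Fin (K j), a j := by
        gcongr with j
        simpa [tsum_fintype] using (hK j).le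

theorem Isometry.iterate {M : Type*} [PseudoEMetricSpace M] {f : M → M} (hf : Isometry f) :
    ∀ n, Isometry f^[n]
  | 0 => isometry_id
  | n + 1 => (hf.iterate n).comp hf

theorem Isometry.dist_lt_add_of_dist_lt {M : Type*} [PseudoMetricSpace M] {g : M → M}
    (hg : Isometry g) {x z : M} {r s : ℝ} (hz : dist (g z) x < r) (hx : dist (g x) x < s) :
    dist z x < r + s :=
  calc dist z x = dist (g z) (g x) := (hg.dist_eq z x).symm
    _ ≤ dist (g z) x + dist (g x) x := dist_triangle_right _ _ _
    _ < r + s := add_lt_add hz hx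

theorem Isometry.iInter_iUnion_preimage_ball_extend_subset {M : Type*} [MetricSpace M]
    {f : M → M} (hf : Isometry f) {x : M} {t : ℕ → ℕ} (ht : StrictMono t)
    {ρ : ℕ → ℝ} (hρ : Tendsto ρ atTop (𝓝 0)) (hrec : ∀ k, dist (f^[t k] x) x < ρ k) :
    ⋂ N : ℕ, ⋃ n ≥ N, f^[n] ⁻¹' ball x (Function.extend t ρ 0 n) ⊆ {x} := by
  intro z hz
  simp only [Set.mem_iInter, Set.mem_iUnion, Set.mem_preimage, mem_ball, exists_prop] at hz
  have hfreq : ∃ᶠ k in atTop, dist z x ≤ ρ k + ρ k := by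
    refine frequently_atTop.2 fun k₀ => ?_
    obtain ⟨n, hn, hzn⟩ := hz (t k₀)
    by_cases hnt : ∃ k, t k = n
    · obtain ⟨k, rfl⟩ := hnt
      rw [ht.injective.extend_apply] at hzn
      exact ⟨k, ht.le_iff_le.1 hn, ((hf.iterate (t k)).dist_lt_add_of_dist_lt hzn (hrec k)).le⟩
    · rw [Function.extend_apply' _ _ _ hnt] at hzn
      exact absurd hzn dist_nonneg.not_gt
  have hdist : dist z x ≤ 0 := by
    simpa using ge_of_tendsto_of_frequently (hρ.add hρ) hfreq
  exact dist_le_zero.1 hdist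

theorem isometry_not_STP_general {M : Type*} [MetricSpace M]
    [TopologicalSpace.SeparableSpace M] [MeasurableSpace M] [BorelSpace M]
    (ν : Measure M) [IsProbabilityMeasure ν] (hna : ∀ x : M, ν {x} = 0)
    (f : M → M) (hiso : Isometry f)
    (hf : MeasurePreserving f ν ν) :
    ∃ (x : M) (r : ℕ → ℝ), (∀ n, 0 ≤ r n) ∧
      (∑' n : ℕ, ν (ball x (r n)) = ⊤) ∧
      ν (⋂ N : ℕ, ⋃ n ≥ N, f^[n] ⁻¹' ball x (r n)) = 0 := by
  have : SecondCountableTopology M := UniformSpace.secondCountable_of_separable M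
  obtain ⟨x, hx_supp, hx_rec⟩ :=
    (Filter.Eventually.and Measure.support_mem_ae
      hf.conservative.ae_frequently_mem_of_mem_nhds).exists
  set ε : ℕ → ℝ := fun j => 1 / (j + 1)
  have hε_pos : ∀ j, 0 < ε j := fun j => Nat.one_div_pos_of_nat
  obtain ⟨b, hb, hb_sum⟩ := ENNReal.exists_tendsto_atTop_tsum_comp_eq_top
    (a := fun j => ν (ball x (ε j))) fun j =>
      ((Measure.mem_support_iff_forall x).1 hx_supp _ (ball_mem_nhds x (hε_pos j))).ne'
  obtain ⟨t, ht, hrec⟩ := extraction_forall_of_frequently fun k =>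
    hx_rec _ (ball_mem_nhds x (hε_pos (b k)))
  refine ⟨x, Function.extend t (ε ∘ b) 0, fun n => ?_, ?_, ?_⟩
  · by_cases hn : ∃ k, t k = n
    · obtain ⟨k, rfl⟩ := hn
      simpa [ht.injective.extend_apply] using (hε_pos (b k)).le
    · simp [Function.extend_apply' _ _ _ hn]
  · refine eq_top_iff.2 (hb_sum.symm.trans_le ?_)
    simpa [ht.injective.extend_apply] using
      ENNReal.tsum_comp_le_tsum_of_injective ht.injective
        (fun n => ν (ball x (Function.extend t (ε ∘ b) 0 n)))
  · refine measure_mono_null (hiso.iInter_iUnion_preimage_ball_extend_subset ht ?_ hrec) (hna x)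
    exact tendsto_one_div_add_atTop_nhds_zero_nat.comp hb

/-- If `M` is a complete, separable metric space, `ν` is a non-atomic Borel
probability measure on `M`, and `f : M → M` is a `ν`-preserving bijective isometry, then
there are a point `x` and a radius sequence `r : ℕ → ℝ≥0` with `∑_n ν(B(x, r n)) = ∞`
but whose limsup set of preimages `⋂_N ⋃_{n ≥ N} (fⁿ)⁻¹(B(x, r n))` is `ν`-null; i.e.
the system does not have the shrinking target property. -/
theorem isometry_not_STP {M : Type*} [MetricSpace M] [CompleteSpace M]
    [TopologicalSpace.SeparableSpace M] [MeasurableSpace M] [BorelSpace M]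
    (ν : Measure M) [IsProbabilityMeasure ν] (hna : ∀ x : M, ν {x} = 0)
    (f : M → M) (hbij : Function.Bijective f) (hiso : Isometry f)
    (hf : MeasurePreserving f ν ν) :
    ∃ (x : M) (r : ℕ → ℝ), (∀ n, 0 ≤ r n) ∧
      (∑' n : ℕ, ν (ball x (r n)) = ⊤) ∧
      ν (⋂ N : ℕ, ⋃ n ≥ N, f^[n] ⁻¹' ball x (r n)) = 0 :=
  isometry_not_STP_general ν hna f hiso hf
end

section
/- Let ν be a non-zero, non-atomic, finite Borel measure on the circle 𝕋¹ = ℝ/ℤ, let f : 𝕋¹ → 𝕋¹ be a ν-preserving homeomorphism, and let x ∈ supp(ν). Then there exists a strictly increasing sequence (n_k)_{k ∈ ℕ} of natural numbers such that for every sequence (ρ_k)_{k ∈ ℕ} of nonnegative reals with ρ_k → 0 as k → ∞, one has ν( ⋂_{l ∈ ℕ} ⋃_{k ≥ l} (f^{n_k})⁻¹( B(x, ρ_k) ) ) = 0. -/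
/-!
Let `D(a, b) = connDist ν a b` be the least `ν`-measure of a preconnected set containing `a` and
`b`. This pseudo-distance is invariant under `f`, and it is small on small balls because `ν` has no
atoms. Choose `n_k` so that the orbits of a countable dense set converge along it; then every orbit
`k ↦ f^[n_k] y` is `D`-Cauchy. A point `y` of the limsup set comes arbitrarily close to `x` along
the subsequence, so `D(f^[n_k] y, x) < ε` for all large `k`, and since `f` preserves `ν` the limsup
set has measure at most `ν {z | D(z, x) < ε}`. On the circle a preconnected set containing `x` and
`z` contains one of the two arcs between them; the points `z` whose arc from (or to) `x` has measure
at most `ε` form a set of measure at most `ε`, so `ν {z | D(z, x) < ε} ≤ 2ε`.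
-/

open MeasureTheory Metric Filter

/-- The topological support of a measure on the circle: the set of points all of whose
open neighborhoods have positive measure. -/
def measureSupport (ν : Measure UnitAddCircle) : Set UnitAddCircle :=
  {x | ∀ U : Set UnitAddCircle, IsOpen U → x ∈ U → 0 < ν U}

open Set Topology TopologicalSpace
open scoped ENNReal

section ConnDist

variable {X : Type*} [TopologicalSpace X] [MeasurableSpace X] {ν : Measure X}

noncomputable def connDist (ν : Measure X) (a b : X) : ℝ≥0∞ :=
  ⨅ (K : Set X) (_ : IsPreconnected K ∧ a ∈ K ∧ b ∈ K), ν K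

theorem connDist_le_measure {a b : X} {K : Set X} (hK : IsPreconnected K) (ha : a ∈ K)
    (hb : b ∈ K) : connDist ν a b ≤ ν K :=
  iInf₂_le K ⟨hK, ha, hb⟩

theorem exists_isPreconnected_measure_lt_of_connDist_lt {a b : X} {ε : ℝ≥0∞}
    (h : connDist ν a b < ε) : ∃ K, IsPreconnected K ∧ a ∈ K ∧ b ∈ K ∧ ν K < ε := by
  simpa only [connDist, iInf_lt_iff, exists_prop, and_assoc] using h

theorem connDist_comm (a b : X) : connDist ν a b = connDist ν b a :=
  iInf_congr fun K => iInf_congr_Prop (by tauto) fun _ => rfl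

theorem connDist_triangle (a b c : X) :
    connDist ν a c ≤ connDist ν a b + connDist ν b c := by
  simp only [connDist, ENNReal.iInf_add, ENNReal.add_iInf]
  refine le_iInf₂ fun K₂ ⟨h₂, hb₂, hc⟩ => le_iInf₂ fun K₁ ⟨h₁, ha, hb₁⟩ => ?_
  exact (connDist_le_measure (h₁.union b hb₁ hb₂ h₂) (.inl ha) (.inr hc)).trans
    (measure_union_le _ _)

theorem connDist_apply_apply [BorelSpace X] {g : X ≃ₜ X} (hg : MeasurePreserving g ν ν)
    (a b : X) : connDist ν (g a) (g b) = connDist ν a b := by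
  have hg' : MeasurePreserving g.toMeasurableEquiv ν ν := hg
  refine le_antisymm (le_iInf₂ fun K ⟨hK, ha, hb⟩ => ?_)
    (le_iInf₂ fun K ⟨hK, ha, hb⟩ => ?_)
  · calc connDist ν (g a) (g b) ≤ ν (g '' K) :=
          connDist_le_measure (hK.image _ g.continuous.continuousOn) (mem_image_of_mem g ha)
            (mem_image_of_mem g hb)
      _ = ν K := by
          rw [← hg'.measure_preimage_equiv]
          simp [preimage_image_eq K g.injective]
  · calc connDist ν a b ≤ ν (g ⁻¹' K) :=
          connDist_le_measure (g.isPreconnected_preimage.2 hK) ha hb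
      _ = ν K := hg'.measure_preimage_equiv K

theorem connDist_iterate_iterate [BorelSpace X] {f : X ≃ₜ X} (hf : MeasurePreserving f ν ν)
    (n : ℕ) (a b : X) : connDist ν (f^[n] a) (f^[n] b) = connDist ν a b := by
  induction n with
  | zero => rfl
  | succ n ih => rw [Function.iterate_succ_apply', Function.iterate_succ_apply',
      connDist_apply_apply hf, ih]

theorem isOpen_setOf_connDist_lt (hD : ∀ y, Tendsto (connDist ν · y) (𝓝 y) (𝓝 0))
    (x : X) (ε : ℝ≥0∞) : IsOpen {z | connDist ν z x < ε} := by
  refine isOpen_iff_mem_nhds.2 fun z hz => ?_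
  have h : Tendsto (fun w => connDist ν w z + connDist ν z x) (𝓝 z) (𝓝 (connDist ν z x)) := by
    simpa using (hD z).add (tendsto_const_nhds (x := connDist ν z x))
  filter_upwards [h.eventually_lt_const hz] with w hw
  exact (connDist_triangle w z x).trans_lt hw

theorem exists_strictMono_tendsto_connDist_iterate [BorelSpace X] [CompactSpace X]
    [SeparableSpace X] [FirstCountableTopology X] (hD : ∀ y, Tendsto (connDist ν · y) (𝓝 y) (𝓝 0))
    {f : X ≃ₜ X} (hf : MeasurePreserving f ν ν) :
    ∃ φ : ℕ → ℕ, StrictMono φ ∧ ∀ y, Tendsto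
      (fun n : ℕ × ℕ => connDist ν (f^[φ n.1] y) (f^[φ n.2] y)) (atTop ×ˢ atTop) (𝓝 0) := by
  obtain ⟨s, hsc, hsd⟩ := TopologicalSpace.exists_countable_dense X
  have := hsc.to_subtype
  obtain ⟨L, φ, hφ, hL⟩ := CompactSpace.tendsto_subseq fun n (u : s) => f^[n] u
  refine ⟨φ, hφ, fun y => ENNReal.tendsto_nhds_zero.2 fun ε hε => ?_⟩
  have hε3 : 0 < ε / 3 := ENNReal.div_pos hε.ne' ENNReal.ofNat_ne_top
  obtain ⟨u, huy, hu⟩ := mem_closure_iff_nhds.1 (hsd y) _ ((hD y).eventually_lt_const hε3)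
  have hLu : Tendsto (fun k => connDist ν (f^[φ k] u) (L ⟨u, hu⟩)) atTop (𝓝 0) :=
    (hD _).comp (tendsto_pi_nhds.1 hL ⟨u, hu⟩)
  have hsum := (hLu.comp tendsto_fst).add (hLu.comp tendsto_snd)
  rw [add_zero] at hsum
  filter_upwards [hsum.eventually_lt_const hε3] with n hn
  calc connDist ν (f^[φ n.1] y) (f^[φ n.2] y)
      ≤ connDist ν (f^[φ n.1] y) (f^[φ n.1] u) + connDist ν (f^[φ n.1] u) (f^[φ n.2] u) +
          connDist ν (f^[φ n.2] u) (f^[φ n.2] y) :=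
        (connDist_triangle _ (f^[φ n.2] u) _).trans
          (add_le_add_left (connDist_triangle _ _ _) _)
    _ ≤ ε / 3 + ε / 3 + ε / 3 := by
        rw [connDist_iterate_iterate hf, connDist_iterate_iterate hf, connDist_comm y]
        refine add_le_add (add_le_add huy.le ?_) huy.le
        refine (connDist_triangle _ (L ⟨u, hu⟩) _).trans ?_
        rw [connDist_comm (L _)]
        exact hn.le
    _ = ε := ENNReal.add_thirds ε

end ConnDist

section Metric

variable {X : Type*} [MetricSpace X] [MeasurableSpace X] [OpensMeasurableSpace X]
  {ν : Measure X}

theorem tendsto_connDist_nhds [IsFiniteMeasure ν] [NullSingletonClass ν]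
    (hball : ∀ (y : X) (r : ℝ), IsPreconnected (ball y r)) (y : X) :
    Tendsto (connDist ν · y) (𝓝 y) (𝓝 0) := by
  have hsmall : Tendsto (fun r => ν (ball y r)) (𝓝[>] 0) (𝓝 0) := by
    simpa [Function.comp_def, biInter_gt_ball, closedBall_zero] using
      tendsto_measure_biInter_gt (μ := ν) (a := (0 : ℝ))
        (fun r _ => measurableSet_ball.nullMeasurableSet)
        (fun _ _ _ h => ball_subset_ball h) ⟨1, one_pos, measure_ne_top _ _⟩
  rw [ENNReal.tendsto_nhds_zero] at hsmall ⊢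
  intro δ hδ
  obtain ⟨r, hνr, hr⟩ := ((hsmall δ hδ).and self_mem_nhdsWithin).exists
  filter_upwards [ball_mem_nhds y hr] with z hz
  exact (connDist_le_measure (hball y r) hz (mem_ball_self hr)).trans hνr

theorem measure_limsup_preimage_ball_le (hD : ∀ y, Tendsto (connDist ν · y) (𝓝 y) (𝓝 0))
    {f : X ≃ₜ X} (hf : MeasurePreserving f ν ν) {φ : ℕ → ℕ}
    (hφ : ∀ y, Tendsto
      (fun n : ℕ × ℕ => connDist ν (f^[φ n.1] y) (f^[φ n.2] y)) (atTop ×ˢ atTop) (𝓝 0))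
    (x : X) {ρ : ℕ → ℝ} (hρ : Tendsto ρ atTop (𝓝 0)) {ε : ℝ≥0∞} (hε : 0 < ε) :
    ν (⋂ l : ℕ, ⋃ k ≥ l, f^[φ k] ⁻¹' ball x (ρ k)) ≤ ν {z | connDist ν z x < ε} := by
  set Z := {z | connDist ν z x < ε}
  have hε2 : 0 < ε / 2 := ENNReal.half_pos hε.ne'
  obtain ⟨r, hr, hrx⟩ := Metric.mem_nhds_iff.1 ((hD x).eventually_lt_const hε2)
  have hsub :
      (⋂ l : ℕ, ⋃ k ≥ l, f^[φ k] ⁻¹' ball x (ρ k)) ⊆ ⋃ m, ⋂ k ≥ m, f^[φ k] ⁻¹' Z := by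
    intro y hy
    have hy' := (hφ y).eventually_lt_const hε2
    rw [prod_atTop_atTop_eq] at hy'
    obtain ⟨N, hN⟩ := eventually_atTop_prod_self'.1 hy'
    obtain ⟨N', hN'⟩ := eventually_atTop.1 (hρ.eventually_lt_const hr)
    obtain ⟨k₀, hk₀, hyk₀⟩ := mem_iUnion₂.1 (mem_iInter.1 hy (max N N'))
    have hk₀x : connDist ν (f^[φ k₀] y) x < ε / 2 :=
      hrx (ball_subset_ball (hN' k₀ (le_of_max_le_right hk₀)).le hyk₀)
    refine mem_iUnion.2 ⟨N, mem_iInter₂.2 fun k hk => ?_⟩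
    calc connDist ν (f^[φ k] y) x
        ≤ connDist ν (f^[φ k] y) (f^[φ k₀] y) + connDist ν (f^[φ k₀] y) x :=
          connDist_triangle _ _ _
      _ < ε / 2 + ε / 2 := ENNReal.add_lt_add (hN k hk k₀ (le_of_max_le_left hk₀)) hk₀x
      _ = ε := ENNReal.add_halves ε
  have hmono : Monotone fun m => ⋂ k ≥ m, f^[φ k] ⁻¹' Z :=
    fun m m' h => biInter_subset_biInter_left fun k hk => h.trans hk
  have hZ : MeasurableSet Z := (isOpen_setOf_connDist_lt hD x ε).measurableSet
  calc ν (⋂ l : ℕ, ⋃ k ≥ l, f^[φ k] ⁻¹' ball x (ρ k))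
      ≤ ν (⋃ m, ⋂ k ≥ m, f^[φ k] ⁻¹' Z) := measure_mono hsub
    _ = ⨆ m, ν (⋂ k ≥ m, f^[φ k] ⁻¹' Z) := hmono.measure_iUnion
    _ ≤ ν Z := iSup_le fun m => (measure_mono (biInter_subset_of_mem le_rfl)).trans_eq
        ((hf.iterate (φ m)).measure_preimage hZ.nullMeasurableSet)

end Metric

section RealLine

variable (μ : Measure ℝ) [IsFiniteMeasure μ] [NullSingletonClass μ]

theorem measure_setOf_measure_Iio_le (ε : ℝ≥0∞) : μ {s | μ (Iio s) ≤ ε} ≤ ε := by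
  have hS : MeasurableSet {s | μ (Iio s) ≤ ε} := OrdConnected.measurableSet
    ⟨fun _ _ _ hb _ ht => (measure_mono (Iio_subset_Iio ht.2)).trans hb⟩
  rw [hS.measure_eq_iSup_isCompact]
  refine iSup₂_le fun K hKS => iSup_le fun hK => ?_
  rcases K.eq_empty_or_nonempty with rfl | hne
  · simp
  calc μ K ≤ μ (Iic (sSup K)) := measure_mono fun t ht => le_csSup hK.bddAbove ht
    _ = μ (Iio (sSup K)) := (measure_congr Iio_ae_eq_Iic).symm
    _ ≤ ε := hKS (hK.sSup_mem hne)

theorem measure_setOf_measure_Ioi_le (ε : ℝ≥0∞) : μ {s | μ (Ioi s) ≤ ε} ≤ ε := by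
  have hS : MeasurableSet {s | μ (Ioi s) ≤ ε} := OrdConnected.measurableSet
    ⟨fun _ ha _ _ _ ht => (measure_mono (Ioi_subset_Ioi ht.1)).trans ha⟩
  rw [hS.measure_eq_iSup_isCompact]
  refine iSup₂_le fun K hKS => iSup_le fun hK => ?_
  rcases K.eq_empty_or_nonempty with rfl | hne
  · simp
  calc μ K ≤ μ (Ici (sInf K)) := measure_mono fun t ht => csInf_le hK.bddBelow ht
    _ = μ (Ioi (sInf K)) := (measure_congr Ioi_ae_eq_Ici).symm
    _ ≤ ε := hKS (hK.sInf_mem hne)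

end RealLine

namespace AddCircle

theorem image_coe_ball {p : ℝ} (t r : ℝ) :
    ((↑) : ℝ → AddCircle p) '' ball t r = ball (t : AddCircle p) r := by
  ext w
  constructor
  · rintro ⟨s, hs, rfl⟩
    rw [mem_ball_iff_norm, ← coe_sub]
    exact QuotientAddGroup.norm_mk_le_norm.trans_lt (mem_ball_iff_norm.1 hs)
  · intro hw
    obtain ⟨m, hm, hmr⟩ := QuotientAddGroup.norm_lt_iff.1 (mem_ball_iff_norm.1 hw)
    exact ⟨m + t, by simpa [mem_ball_iff_norm] using hmr, by simp [hm]⟩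

theorem isPreconnected_ball {p : ℝ} (x : AddCircle p) (r : ℝ) : IsPreconnected (ball x r) := by
  obtain ⟨t, rfl⟩ := QuotientAddGroup.mk_surjective x
  rw [← image_coe_ball]
  exact (convex_ball t r).isPreconnected.image _ continuous_quotient_mk'.continuousOn

variable {p : ℝ} [hp : Fact (0 < p)]

noncomputable def coordFrom (x w : AddCircle p) : ℝ := equivIco p 0 (w - x)

theorem coordFrom_mem (x w : AddCircle p) : coordFrom x w ∈ Ico 0 p := by
  simpa [coordFrom] using (equivIco p 0 (w - x)).2

theorem coe_coordFrom (x w : AddCircle p) : (coordFrom x w : AddCircle p) = w - x :=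
  coe_equivIco

theorem coordFrom_eq_of_mem {x w : AddCircle p} {t : ℝ} (ht : t ∈ Ico 0 p)
    (h : (t : AddCircle p) = w - x) : coordFrom x w = t := by
  rw [coordFrom, ← h, equivIco_coe_of_mem (by simpa using ht)]

theorem coordFrom_injective (x : AddCircle p) : Function.Injective (coordFrom x) :=
  fun w w' h => by simpa [coe_coordFrom] using congrArg ((↑) : ℝ → AddCircle p) h

theorem coordFrom_self (x : AddCircle p) : coordFrom x x = 0 :=
  coordFrom_eq_of_mem ⟨le_rfl, hp.out⟩ (by simp)

theorem coordFrom_pos {x w : AddCircle p} (h : w ≠ x) : 0 < coordFrom x w :=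
  (coordFrom_mem x w).1.lt_of_ne fun h0 =>
    h (coordFrom_injective x (h0.symm.trans (coordFrom_self x).symm))

theorem coordFrom_eq_sub {x u w : AddCircle p} (h : coordFrom x u ≤ coordFrom x w) :
    coordFrom u w = coordFrom x w - coordFrom x u :=
  coordFrom_eq_of_mem
    ⟨sub_nonneg.2 h, by linarith [(coordFrom_mem x w).2, (coordFrom_mem x u).1]⟩
    (by rw [coe_sub, coe_coordFrom, coe_coordFrom, sub_sub_sub_cancel_right])

theorem coordFrom_swap {x u : AddCircle p} (h : u ≠ x) : coordFrom u x = p - coordFrom x u :=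
  coordFrom_eq_of_mem ⟨by linarith [(coordFrom_mem x u).2], by linarith [coordFrom_pos h]⟩
    (by rw [coe_sub, coe_period, zero_sub, coe_coordFrom, neg_sub])

theorem continuousAt_coordFrom {x w : AddCircle p} (h : w ≠ x) :
    ContinuousAt (coordFrom x) w :=
  continuous_subtype_val.continuousAt.comp <|
    (continuousAt_equivIco p 0 (by simpa [sub_eq_zero] using h)).comp
      (continuous_sub_right x).continuousAt

theorem measurable_coordFrom (x : AddCircle p) : Measurable (coordFrom x) :=
  measurable_subtype_coe.comp <|
    (measurableEquivIco p 0).measurable.comp (measurable_sub_const x)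

/- `coordFrom x ⁻¹' Iio (coordFrom x z)` is the arc from `x` to `z` (with `x`), and
`coordFrom x ⁻¹' Ioi (coordFrom x z)` the arc from `z` back to `x`. If `K` missed a point `u` of
the first and `v` of the second, `coordFrom u` would be continuous on `K`, so its image would be
an interval containing the coordinates of `z` and `x`, hence that of `v`. -/
theorem coordFrom_preimage_Iio_subset_or_Ioi_subset {K : Set (AddCircle p)}
    (hK : IsPreconnected K) {x z : AddCircle p} (hx : x ∈ K) (hz : z ∈ K) :
    coordFrom x ⁻¹' Iio (coordFrom x z) ⊆ K ∨ coordFrom x ⁻¹' Ioi (coordFrom x z) ⊆ K := by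
  by_contra! h
  obtain ⟨u, hu, huK⟩ := not_subset.1 h.1
  obtain ⟨v, hv, hvK⟩ := not_subset.1 h.2
  have hux : u ≠ x := (ne_of_mem_of_not_mem hx huK).symm
  have hcont : ContinuousOn (coordFrom u) K := fun w hw =>
    (continuousAt_coordFrom (ne_of_mem_of_not_mem hw huK)).continuousWithinAt
  replace hu : coordFrom x u < coordFrom x z := hu
  replace hv : coordFrom x z < coordFrom x v := hv
  have hv_mem : coordFrom u v ∈ Icc (coordFrom u z) (coordFrom u x) := by
    rw [coordFrom_eq_sub (hu.le.trans hv.le), coordFrom_eq_sub hu.le, coordFrom_swap hux]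
    exact ⟨by linarith, by linarith [(coordFrom_mem x v).2]⟩
  obtain ⟨w, hw, hwv⟩ := (hK.image _ hcont).Icc_subset (mem_image_of_mem _ hz)
    (mem_image_of_mem _ hx) hv_mem
  exact hvK (coordFrom_injective u hwv ▸ hw)

theorem measure_setOf_connDist_lt_le (ν : Measure (AddCircle p)) [IsFiniteMeasure ν]
    [NullSingletonClass ν] (x : AddCircle p) (ε : ℝ≥0∞) :
    ν {z | connDist ν z x < ε} ≤ ε + ε := by
  set μ := ν.map (coordFrom x)
  have hmeas := measurable_coordFrom x
  have : NullSingletonClass μ := ⟨fun s => by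
    rw [Measure.map_apply hmeas (measurableSet_singleton s)]
    exact (subsingleton_singleton.preimage (coordFrom_injective x)).measure_zero ν⟩
  have hsub : {z | connDist ν z x < ε} ⊆
      coordFrom x ⁻¹' ({s | μ (Iio s) ≤ ε} ∪ {s | μ (Ioi s) ≤ ε}) := by
    intro z hz
    obtain ⟨K, hK, hzK, hxK, hνK⟩ := exists_isPreconnected_measure_lt_of_connDist_lt hz
    rcases coordFrom_preimage_Iio_subset_or_Ioi_subset hK hxK hzK with h | h
    · left
      rw [mem_ofPred_eq, Measure.map_apply hmeas measurableSet_Iio]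
      exact (measure_mono h).trans hνK.le
    · right
      rw [mem_ofPred_eq, Measure.map_apply hmeas measurableSet_Ioi]
      exact (measure_mono h).trans hνK.le
  calc ν {z | connDist ν z x < ε}
      ≤ μ ({s | μ (Iio s) ≤ ε} ∪ {s | μ (Ioi s) ≤ ε}) :=
        (measure_mono hsub).trans (Measure.le_map_apply hmeas.aemeasurable _)
    _ ≤ μ {s | μ (Iio s) ≤ ε} + μ {s | μ (Ioi s) ≤ ε} := measure_union_le _ _
    _ ≤ ε + ε :=
        add_le_add (measure_setOf_measure_Iio_le μ ε) (measure_setOf_measure_Ioi_le μ ε)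

end AddCircle

theorem subsequence_with_null_limsup_general (ν : Measure UnitAddCircle) [IsFiniteMeasure ν]
    (hna : ∀ y : UnitAddCircle, ν {y} = 0)
    (f : UnitAddCircle ≃ₜ UnitAddCircle) (hf : MeasurePreserving f ν ν)
    (x : UnitAddCircle) :
    ∃ nk : ℕ → ℕ, StrictMono nk ∧
      ∀ ρ : ℕ → ℝ, (∀ k, 0 ≤ ρ k) → Tendsto ρ atTop (nhds 0) →
        ν (⋂ l : ℕ, ⋃ k ≥ l, (⇑f)^[nk k] ⁻¹' ball x (ρ k)) = 0 := by
  have : NullSingletonClass ν := ⟨hna⟩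
  have hD := tendsto_connDist_nhds (ν := ν) AddCircle.isPreconnected_ball
  obtain ⟨φ, hφ, hcauchy⟩ := exists_strictMono_tendsto_connDist_iterate hD hf
  refine ⟨φ, hφ, fun ρ _ hρ => nonpos_iff_eq_zero.1 ?_⟩
  refine ENNReal.le_of_forall_pos_le_add fun ε hε _ => ?_
  have hε2 : (0 : ℝ≥0∞) < ε / 2 := ENNReal.half_pos (by exact_mod_cast hε.ne')
  calc ν (⋂ l : ℕ, ⋃ k ≥ l, f^[φ k] ⁻¹' ball x (ρ k))
      ≤ ν {z | connDist ν z x < ε / 2} :=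
        measure_limsup_preimage_ball_le hD hf hcauchy x hρ hε2
    _ ≤ ε / 2 + ε / 2 := AddCircle.measure_setOf_connDist_lt_le ν x _
    _ = 0 + ε := by rw [ENNReal.add_halves, zero_add]

/-- Let `ν` be a non-zero, non-atomic, finite Borel measure on `𝕋¹ = ℝ/ℤ`,
`f` a `ν`-preserving homeomorphism and `x ∈ supp(ν)`. Then there is a strictly
increasing sequence `(n_k)` of natural numbers such that for every sequence `(ρ_k)` of
nonnegative reals tending to `0`, the set `⋂_l ⋃_{k ≥ l} (f^{n_k})⁻¹(B(x, ρ_k))` is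
`ν`-null. -/
theorem subsequence_with_null_limsup (ν : Measure UnitAddCircle) [IsFiniteMeasure ν]
    (hne : ν ≠ 0) (hna : ∀ y : UnitAddCircle, ν {y} = 0)
    (f : UnitAddCircle ≃ₜ UnitAddCircle) (hf : MeasurePreserving f ν ν)
    (x : UnitAddCircle) (hx : x ∈ measureSupport ν) :
    ∃ nk : ℕ → ℕ, StrictMono nk ∧
      ∀ ρ : ℕ → ℝ, (∀ k, 0 ≤ ρ k) → Tendsto ρ atTop (nhds 0) →
        ν (⋂ l : ℕ, ⋃ k ≥ l, (⇑f)^[nk k] ⁻¹' ball x (ρ k)) = 0 :=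
  subsequence_with_null_limsup_general ν hna f hf x
end
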